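/- arXiv:1206.0576 — 4 statements merged into one kernel-verified Lean document; each statement's English description precedes it below -/
import Mathlib

section
/- Criterion C3 (Proposition 3.1): Under the stated invertibility hypothesis, the trace of (XᵗX)⁻¹ equals Σ_{j=1}^{J} Σ_{l=1}^{L} N(j,l)/(Ñ(j,l)·(N(j,l)−Ñ(j,l))) + (L+1)·Σ_{j=1}^{J} N(j,0)/(Ñ(j,0)·(N(j,0)−Ñ(j,0))) + (J+1)·Σ_{l=1}^{L} N(0,l)/(Ñ(0,l)·(N(0,l)−Ñ(0,l))) + (J+1)(L+1)·N(0,0)/(Ñ(0,0)·(N(0,0)−Ñ(0,0))). -/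
open Matrix Finset

noncomputable section

/-- The set of strata `{0,…,J} × {0,…,L}`. -/
abbrev Stratum (J L : ℕ) := Fin (J + 1) × Fin (L + 1)

/-- Index type for the `p = J + L + J·L` dummy/interaction coordinates. -/
abbrev Idx (J L : ℕ) := Fin J ⊕ Fin L ⊕ (Fin J × Fin L)

/-- Full dummy coding of a stratum, with all interactions. -/
def dummy (J L : ℕ) (s : Stratum J L) : Idx J L → ℝ := fun k =>
  match k with
  | Sum.inl j' => if (s.1 : ℕ) = (j' : ℕ) + 1 then 1 else 0
  | Sum.inr (Sum.inl l') => if (s.2 : ℕ) = (l' : ℕ) + 1 then 1 else 0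
  | Sum.inr (Sum.inr q) =>
      if (s.1 : ℕ) = (q.1 : ℕ) + 1 ∧ (s.2 : ℕ) = (q.2 : ℕ) + 1 then 1 else 0

/-- Column index type of the design matrix: dimension `2 + 2p`. -/
abbrev Cols (J L : ℕ) := Fin 2 ⊕ (Idx J L ⊕ Idx J L)

/-- The design matrix `X`, whose `i`-th row is `(δ_i, 1-δ_i, δ_i f(z_i)ᵗ, (1-δ_i) f(z_i)ᵗ)`. -/
def designX (J L n : ℕ) (z : Fin n → Stratum J L) (δ : Fin n → Bool) :
    Matrix (Fin n) (Cols J L) ℝ :=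
  Matrix.of fun i c =>
    match c with
    | Sum.inl a => if a = 0 then (if δ i then (1 : ℝ) else 0) else (if δ i then 0 else 1)
    | Sum.inr (Sum.inl k) => if δ i then dummy J L (z i) k else 0
    | Sum.inr (Sum.inr k) => if δ i then 0 else dummy J L (z i) k

/-- `N(j,l)`: the size of stratum `(j,l)`. -/
def strN (J L n : ℕ) (z : Fin n → Stratum J L) (s : Stratum J L) : ℕ :=
  (Finset.univ.filter fun i => z i = s).card

/-- `Ñ(j,l)`: the number of members of stratum `(j,l)` assigned to treatment `A`. -/
def strNA (J L n : ℕ) (z : Fin n → Stratum J L) (δ : Fin n → Bool) (s : Stratum J L) : ℕ :=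
  (Finset.univ.filter fun i => z i = s ∧ δ i = true).card


/-!
Group the patients into the cells (arm, stratum). Up to a reordering of its columns, row `i` of `X`
is the row of cell `(δ i, z i)` in the square coding matrix `C = I₂ ⊗ A_J ⊗ A_L`, where `A_J` is
the dummy coding of `{0, …, J}` with an intercept column. Hence `XᵀX = Cᵀ D C` with `D` the
diagonal matrix of cell counts, and `tr (XᵀX)⁻¹ = ∑_cells ‖C⁻¹ e_cell‖² / count`. The column of
`A_J⁻¹` at the reference level `0` has squared norm `J + 1` and every other column has squared
norm `1`; the Kronecker structure multiplies these weights, and `1/Ñ + 1/(N - Ñ) = N / (Ñ (N - Ñ))`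
combines the two arms.
-/

open scoped Kronecker

namespace Matrix

variable {ι κ μ ν R : Type*} [Fintype ι] [Fintype κ] [DecidableEq κ]

theorem transpose_mul_self_submatrix [CommSemiring R] (C : Matrix κ μ R) (g : ι → κ)
    (f : ν → μ) :
    (C.submatrix g f)ᵀ * C.submatrix g f =
      (Cᵀ * diagonal (fun k => (#{i | g i = k} : R)) * C).submatrix f f := by
  ext a b
  rw [submatrix_apply, mul_apply, mul_apply, ← Finset.sum_fiberwise Finset.univ g]
  refine Finset.sum_congr rfl fun k _ => ?_
  rw [Finset.sum_congr rfl fun i hi => by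
      rw [transpose_apply, submatrix_apply, submatrix_apply, (Finset.mem_filter.mp hi).2],
    Finset.sum_const, nsmul_eq_mul, mul_diagonal, transpose_apply]
  ring

theorem trace_inv_transpose_mul_self_submatrix [Fintype μ] [DecidableEq μ] [Fintype ν]
    [DecidableEq ν] [Field R] (C : Matrix κ μ R) (B : Matrix μ κ R)
    (hBC : B * C = 1) (hCB : C * B = 1) (g : ι → κ) (e : ν ≃ μ)
    (hg : ∀ k, (#{i | g i = k} : R) ≠ 0) :
    (((C.submatrix g e)ᵀ * C.submatrix g e)⁻¹).trace =
      ∑ k, (Bᵀ * B) k k / #{i | g i = k} := by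
  set d : κ → R := fun k => #{i | g i = k}
  have hd : diagonal d * diagonal d⁻¹ = 1 := by
    rw [diagonal_mul_diagonal, ← diagonal_one]
    exact congrArg diagonal (funext fun k => mul_inv_cancel₀ (hg k))
  have hinv : (Cᵀ * diagonal d * C) * (B * diagonal d⁻¹ * Bᵀ) = 1 :=
    calc (Cᵀ * diagonal d * C) * (B * diagonal d⁻¹ * Bᵀ)
        = Cᵀ * (diagonal d * (C * B) * diagonal d⁻¹) * Bᵀ := by simp only [Matrix.mul_assoc]
      _ = (B * C)ᵀ := by rw [hCB, Matrix.mul_one, hd, Matrix.mul_one, transpose_mul]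
      _ = 1 := by rw [hBC, transpose_one]
  have trace_submatrix (M : Matrix μ μ R) : (M.submatrix e e).trace = M.trace :=
    e.sum_comp fun m => M m m
  rw [transpose_mul_self_submatrix, inv_submatrix_equiv, inv_eq_right_inv hinv,
    trace_submatrix, trace_mul_cycle]
  simp only [trace, diag, mul_diagonal, Pi.inv_apply, div_eq_mul_inv, d]

end Matrix

section DummyCoding

variable (R : Type*) [CommRing R] (J : ℕ)

/-- Level `j` of a factor with levels `{0, …, J}`: the column `none` is the intercept, the column
`some j'` is the dummy of level `j' + 1`; level `0` is the reference level. -/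
def dummyCoding : Matrix (Fin (J + 1)) (Option (Fin J)) R :=
  of fun j o => o.elim 1 fun j' => if j = j'.succ then 1 else 0

def dummyCodingInv : Matrix (Option (Fin J)) (Fin (J + 1)) R :=
  of fun o j => o.elim (if j = 0 then 1 else 0)
    fun j' => (if j = j'.succ then 1 else 0) - if j = 0 then 1 else 0

theorem dummyCodingInv_mul_dummyCoding : dummyCodingInv R J * dummyCoding R J = 1 := by
  ext o o'
  rcases o with _ | j <;> rcases o' with _ | j' <;>
    simp [mul_apply, dummyCoding, dummyCodingInv, one_apply, eq_comm]

theorem dummyCoding_mul_dummyCodingInv : dummyCoding R J * dummyCodingInv R J = 1 :=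
  (mul_eq_one_comm_of_equiv (finSuccEquiv J)).mpr (dummyCodingInv_mul_dummyCoding R J)

theorem transpose_dummyCodingInv_mul_self_apply_self (j : Fin (J + 1)) :
    ((dummyCodingInv R J)ᵀ * dummyCodingInv R J) j j = if j = 0 then (J : R) + 1 else 1 := by
  rcases Fin.eq_zero_or_eq_succ j with rfl | ⟨j, rfl⟩ <;>
    simp [mul_apply, dummyCodingInv, (Fin.succ_ne_zero _).symm, add_comm]

end DummyCoding

section Design

variable {J L : ℕ}

variable (J L) in
def designCoding : Matrix (Bool × Stratum J L) (Bool × (Option (Fin J) × Option (Fin L))) ℝ :=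
  (1 : Matrix Bool Bool ℝ) ⊗ₖ (dummyCoding ℝ J ⊗ₖ dummyCoding ℝ L)

variable (J L) in
def designCodingInv : Matrix (Bool × (Option (Fin J) × Option (Fin L))) (Bool × Stratum J L) ℝ :=
  (1 : Matrix Bool Bool ℝ) ⊗ₖ (dummyCodingInv ℝ J ⊗ₖ dummyCodingInv ℝ L)

def stratumWeight (s : Stratum J L) : ℝ :=
  (if s.1 = 0 then (J : ℝ) + 1 else 1) * (if s.2 = 0 then (L : ℝ) + 1 else 1)

theorem designCodingInv_mul_designCoding : designCodingInv J L * designCoding J L = 1 := by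
  rw [designCodingInv, designCoding, ← mul_kronecker_mul, ← mul_kronecker_mul,
    dummyCodingInv_mul_dummyCoding, dummyCodingInv_mul_dummyCoding, Matrix.one_mul,
    one_kronecker_one, one_kronecker_one]

theorem designCoding_mul_designCodingInv : designCoding J L * designCodingInv J L = 1 := by
  rw [designCodingInv, designCoding, ← mul_kronecker_mul, ← mul_kronecker_mul,
    dummyCoding_mul_dummyCodingInv, dummyCoding_mul_dummyCodingInv, Matrix.one_mul,
    one_kronecker_one, one_kronecker_one]

theorem transpose_designCodingInv_mul_self_apply_self (b : Bool) (s : Stratum J L) :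
    ((designCodingInv J L)ᵀ * designCodingInv J L) (b, s) (b, s) = stratumWeight s := by
  rw [designCodingInv, ← kroneckerMap_transpose, ← kroneckerMap_transpose, ← mul_kronecker_mul,
    ← mul_kronecker_mul, kronecker_apply, kronecker_apply,
    transpose_dummyCodingInv_mul_self_apply_self, transpose_dummyCodingInv_mul_self_apply_self]
  simp [stratumWeight]

theorem sum_stratumWeight_mul (F : Stratum J L → ℝ) :
    ∑ s, stratumWeight s * F s =
      ∑ j : Fin J, ∑ l : Fin L, F (j.succ, l.succ) + ((L : ℝ) + 1) * ∑ j : Fin J, F (j.succ, 0)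
        + ((J : ℝ) + 1) * ∑ l : Fin L, F (0, l.succ) + ((J : ℝ) + 1) * ((L : ℝ) + 1) * F (0, 0) := by
  simp only [stratumWeight, Fintype.sum_prod_type, Fin.sum_univ_succ, Fin.succ_ne_zero, if_true,
    if_false, one_mul, mul_one, Finset.mul_sum, Finset.sum_add_distrib]
  ring

variable (J L) in
def colsEquiv : Cols J L ≃ Bool × (Option (Fin J) × Option (Fin L)) where
  toFun
    | .inl a => (a = 0, none, none)
    | .inr (.inl (.inl j)) => (true, some j, none)
    | .inr (.inl (.inr (.inl l))) => (true, none, some l)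
    | .inr (.inl (.inr (.inr (j, l)))) => (true, some j, some l)
    | .inr (.inr (.inl j)) => (false, some j, none)
    | .inr (.inr (.inr (.inl l))) => (false, none, some l)
    | .inr (.inr (.inr (.inr (j, l)))) => (false, some j, some l)
  invFun
    | (b, none, none) => .inl (if b then 0 else 1)
    | (true, some j, none) => .inr (.inl (.inl j))
    | (true, none, some l) => .inr (.inl (.inr (.inl l)))
    | (true, some j, some l) => .inr (.inl (.inr (.inr (j, l))))
    | (false, some j, none) => .inr (.inr (.inl j))
    | (false, none, some l) => .inr (.inr (.inr (.inl l)))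
    | (false, some j, some l) => .inr (.inr (.inr (.inr (j, l))))
  left_inv := by
    rintro (a | (j | l | ⟨j, l⟩) | (j | l | ⟨j, l⟩)) <;> try rfl
    fin_cases a <;> rfl
  right_inv := by
    rintro ⟨_ | _, _ | j, _ | l⟩ <;> rfl

variable {n : ℕ} (z : Fin n → Stratum J L) (δ : Fin n → Bool)

theorem designX_eq_submatrix :
    designX J L n z δ = (designCoding J L).submatrix (fun i => (δ i, z i)) (colsEquiv J L) := by
  have eq_succ_iff {m : ℕ} (a : Fin (m + 1)) (b : Fin m) : a = b.succ ↔ (a : ℕ) = b + 1 := by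
    rw [Fin.ext_iff, Fin.val_succ]
  ext i c
  rcases c with a | (j | l | ⟨j, l⟩) | (j | l | ⟨j, l⟩)
  · fin_cases a <;> cases hb : δ i <;>
      simp [designX, designCoding, colsEquiv, dummyCoding, one_apply, hb]
  all_goals cases hb : δ i <;>
    simp [designX, designCoding, colsEquiv, dummyCoding, dummy, one_apply, hb, eq_succ_iff,
      ite_and] <;>
    split_ifs <;> rfl

theorem card_treated_eq_strNA (s : Stratum J L) :
    #{i | (δ i, z i) = (true, s)} = strNA J L n z δ s := by
  simp only [strNA, Prod.mk.injEq, and_comm]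

theorem card_control_add_strNA (s : Stratum J L) :
    #{i | (δ i, z i) = (false, s)} + strNA J L n z δ s = strN J L n z s := by
  rw [strN, ← Finset.card_filter_add_card_filter_not (s := {i | z i = s}) (fun i => δ i = false)]
  simp only [strNA, Finset.filter_filter, Prod.mk.injEq, Bool.not_eq_false, and_comm]

end Design

theorem C3_trace_general (J L n : ℕ)
    (z : Fin n → Stratum J L) (δ : Fin n → Bool)
    (hA : ∀ s : Stratum J L, 1 ≤ strNA J L n z δ s)
    (hB : ∀ s : Stratum J L, strNA J L n z δ s + 1 ≤ strN J L n z s) :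
    (((designX J L n z δ)ᵀ * designX J L n z δ)⁻¹).trace =
      (∑ j : Fin J, ∑ l : Fin L,
          (strN J L n z (j.succ, l.succ) : ℝ) /
            ((strNA J L n z δ (j.succ, l.succ) : ℝ) *
              ((strN J L n z (j.succ, l.succ) : ℝ) - (strNA J L n z δ (j.succ, l.succ) : ℝ))))
      + ((L : ℝ) + 1) * ∑ j : Fin J,
          (strN J L n z (j.succ, 0) : ℝ) /
            ((strNA J L n z δ (j.succ, 0) : ℝ) *
              ((strN J L n z (j.succ, 0) : ℝ) - (strNA J L n z δ (j.succ, 0) : ℝ)))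
      + ((J : ℝ) + 1) * ∑ l : Fin L,
          (strN J L n z (0, l.succ) : ℝ) /
            ((strNA J L n z δ (0, l.succ) : ℝ) *
              ((strN J L n z (0, l.succ) : ℝ) - (strNA J L n z δ (0, l.succ) : ℝ)))
      + ((J : ℝ) + 1) * ((L : ℝ) + 1) *
          ((strN J L n z (0, 0) : ℝ) /
            ((strNA J L n z δ (0, 0) : ℝ) *
              ((strN J L n z (0, 0) : ℝ) - (strNA J L n z δ (0, 0) : ℝ)))) := by
  have hcontrol (s : Stratum J L) :
      (#{i | (δ i, z i) = (false, s)} : ℝ) = strN J L n z s - strNA J L n z δ s := by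
    rw [← card_control_add_strNA z δ s]; push_cast; ring
  have hcount (t : Bool × Stratum J L) : (#{i | (δ i, z i) = t} : ℝ) ≠ 0 := by
    obtain ⟨_ | _, s⟩ := t
    · rw [hcontrol, sub_ne_zero]; exact_mod_cast (Nat.lt_of_succ_le (hB s)).ne'
    · rw [card_treated_eq_strNA]; exact_mod_cast Nat.one_le_iff_ne_zero.mp (hA s)
  rw [designX_eq_submatrix, trace_inv_transpose_mul_self_submatrix _ _
      designCodingInv_mul_designCoding designCoding_mul_designCodingInv _ _ hcount,
    Fintype.sum_prod_type, Fintype.sum_bool, ← Finset.sum_add_distrib]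
  convert sum_stratumWeight_mul fun s =>
    (strN J L n z s : ℝ) / (strNA J L n z δ s * (strN J L n z s - strNA J L n z δ s)) using 1
  refine Finset.sum_congr rfl fun s _ => ?_
  have htreated := hcount (true, s)
  have hcontrol_ne := hcount (false, s)
  simp only [transpose_designCodingInv_mul_self_apply_self, card_treated_eq_strNA, hcontrol]
    at htreated hcontrol_ne ⊢
  field_simp
  ring

/-- Criterion C3 (Proposition 3.1): the trace of `(XᵗX)⁻¹`. -/
theorem C3_trace (J L n : ℕ) (hJ : 1 ≤ J) (hL : 1 ≤ L) (hn : 1 ≤ n)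
    (z : Fin n → Stratum J L) (δ : Fin n → Bool)
    (hA : ∀ s : Stratum J L, 1 ≤ strNA J L n z δ s)
    (hB : ∀ s : Stratum J L, strNA J L n z δ s + 1 ≤ strN J L n z s) :
    (((designX J L n z δ)ᵀ * designX J L n z δ)⁻¹).trace =
      (∑ j : Fin J, ∑ l : Fin L,
          (strN J L n z (j.succ, l.succ) : ℝ) /
            ((strNA J L n z δ (j.succ, l.succ) : ℝ) *
              ((strN J L n z (j.succ, l.succ) : ℝ) - (strNA J L n z δ (j.succ, l.succ) : ℝ))))
      + ((L : ℝ) + 1) * ∑ j : Fin J,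
          (strN J L n z (j.succ, 0) : ℝ) /
            ((strNA J L n z δ (j.succ, 0) : ℝ) *
              ((strN J L n z (j.succ, 0) : ℝ) - (strNA J L n z δ (j.succ, 0) : ℝ)))
      + ((J : ℝ) + 1) * ∑ l : Fin L,
          (strN J L n z (0, l.succ) : ℝ) /
            ((strNA J L n z δ (0, l.succ) : ℝ) *
              ((strN J L n z (0, l.succ) : ℝ) - (strNA J L n z δ (0, l.succ) : ℝ)))
      + ((J : ℝ) + 1) * ((L : ℝ) + 1) *
          ((strN J L n z (0, 0) : ℝ) /
            ((strNA J L n z δ (0, 0) : ℝ) *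
              ((strN J L n z (0, 0) : ℝ) - (strNA J L n z δ (0, 0) : ℝ)))) :=
  C3_trace_general J L n z δ hA hB
end
end

section
/- Criteria C4 and C5 coincide (Proposition 3.1): Under the stated invertibility hypothesis, with Dᵗ = (0_{2p×2} : I_{2p}) and Eᵗ = (0_{p×2} : I_p : −I_p), one has tr(Dᵗ(XᵗX)⁻¹D) = tr(Eᵗ(XᵗX)⁻¹E), and both equal tr((XᵗX)⁻¹) − N(0,0)/(Ñ(0,0)·(N(0,0)−Ñ(0,0))). -/
open Matrix Finset

noncomputable section

/-- The selection matrix `D` with `Dᵗ = (0_{2p×2} : I_{2p})`. -/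
def selD (J L : ℕ) : Matrix (Cols J L) (Idx J L ⊕ Idx J L) ℝ :=
  Matrix.of fun r c =>
    match r with
    | Sum.inl _ => 0
    | Sum.inr k => if k = c then 1 else 0

/-- The contrast matrix `E` with `Eᵗ = (0_{p×2} : I_p : −I_p)`. -/
def selE (J L : ℕ) : Matrix (Cols J L) (Idx J L) ℝ :=
  Matrix.of fun r c =>
    match r with
    | Sum.inl _ => 0
    | Sum.inr (Sum.inl k) => if k = c then 1 else 0
    | Sum.inr (Sum.inr k) => if k = c then -1 else 0

/-! Group the patients into the `2(J+1)(L+1) = 2 + 2p` cells (arm, stratum). Then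
`XᵀX = Cᵀ diag(n) C`, where `C` is the square matrix whose rows are the design rows of the cells
and `n` the cell counts. The coding with all interactions is saturated, so `C` is invertible; its
inverse is explicit, a tensor product of the one-factor identity
`1{x = j} = 1{j = 0} + ∑ j', (1{j = j'+1} - 1{j = 0}) 1{x = j'+1}`.
Hence `(XᵀX)⁻¹ = C⁻¹ diag(1/n) C⁻ᵀ`. The columns of `C⁻¹` for the coefficients of one arm vanish on
the cells of the other arm, so the off-diagonal blocks between `β_A` and `β_B` are zero and the
two traces agree; the intercept columns are the indicators of the reference cells `(A, (0,0))`
and `(B, (0,0))`, so the intercept entries are `1/Ñ(0,0)` and `1/(N(0,0) - Ñ(0,0))`, whose sum is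
the term subtracted from `tr((XᵀX)⁻¹)`. -/

section Levels

variable {m : ℕ}

def levelConst (j : Fin (m + 1)) : ℝ := if j = 0 then 1 else 0

def levelCoef (j : Fin (m + 1)) (j' : Fin m) : ℝ :=
  (if j = j'.succ then 1 else 0) - levelConst j

lemma val_eq_val_add_one_iff (x : Fin (m + 1)) (j' : Fin m) :
    (x : ℕ) = (j' : ℕ) + 1 ↔ x = j'.succ := by
  simp [Fin.ext_iff]

lemma sum_ite_val_eq_add_one_mul (x : Fin (m + 1)) (g : Fin m → ℝ) :
    ∑ j' : Fin m, (if (x : ℕ) = (j' : ℕ) + 1 then 1 else 0) * g j' =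
      Fin.cases 0 g x := by
  simp only [val_eq_val_add_one_iff, ite_mul, one_mul, zero_mul]
  cases x using Fin.cases with
  | zero => simp [(Fin.succ_ne_zero _).symm]
  | succ k => simp [Fin.succ_inj]

lemma levelConst_add_sum_mul_levelCoef (x j : Fin (m + 1)) :
    levelConst j + ∑ j' : Fin m, (if (x : ℕ) = (j' : ℕ) + 1 then 1 else 0) * levelCoef j j' =
      if x = j then 1 else 0 := by
  rw [sum_ite_val_eq_add_one_mul]
  cases x using Fin.cases <;> cases j using Fin.cases <;>
    simp [levelCoef, levelConst, Fin.succ_ne_zero, Fin.succ_inj, eq_comm]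

end Levels

section Strata

variable {J L : ℕ}

def strataConst (s : Stratum J L) : ℝ := levelConst s.1 * levelConst s.2

def strataCoef (s : Stratum J L) : Idx J L → ℝ
  | Sum.inl j' => levelCoef s.1 j' * levelConst s.2
  | Sum.inr (Sum.inl l') => levelConst s.1 * levelCoef s.2 l'
  | Sum.inr (Sum.inr q) => levelCoef s.1 q.1 * levelCoef s.2 q.2

lemma strataConst_add_sum_ite_val_eq_add_one_mul_strataCoef (s' s : Stratum J L) :
    strataConst s + ∑ k, dummy J L s' k * strataCoef s k = if s' = s then 1 else 0 := by
  have hand : ∀ p q : Prop, [Decidable p] → [Decidable q] →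
      (if p ∧ q then (1 : ℝ) else 0) = (if p then 1 else 0) * (if q then 1 else 0) := by
    intro p q _ _
    rw [ite_zero_mul_ite_zero, one_mul]
  simp only [Prod.ext_iff, hand]
  -- the right side is the product of the one-factor identities for the two coordinates
  rw [← levelConst_add_sum_mul_levelCoef, ← levelConst_add_sum_mul_levelCoef,
    add_mul, mul_add, mul_add, Finset.sum_mul_sum, Finset.mul_sum, Finset.sum_mul]
  simp only [Fintype.sum_sum_type, Fintype.sum_prod_type, dummy, strataCoef, strataConst, hand]
  ring_nf
  simp only [mul_comm, mul_left_comm]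

end Strata

section Arms

variable {ι : Type*}

/-- `(x₀, x)` in the coordinates `(μ_A, β_A)` if `b`, in `(μ_B, β_B)` otherwise. -/
def armEmbed (b : Bool) (x₀ : ℝ) (x : ι → ℝ) : Fin 2 ⊕ (ι ⊕ ι) → ℝ
  | Sum.inl a => if a = 0 then (if b then x₀ else 0) else (if b then 0 else x₀)
  | Sum.inr (Sum.inl k) => if b then x k else 0
  | Sum.inr (Sum.inr k) => if b then 0 else x k

lemma sum_armEmbed_mul_armEmbed [Fintype ι] (b b' : Bool) (x₀ y₀ : ℝ) (x y : ι → ℝ) :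
    ∑ c, armEmbed b x₀ x c * armEmbed b' y₀ y c =
      if b = b' then x₀ * y₀ + ∑ k, x k * y k else 0 := by
  cases b <;> cases b' <;> simp [armEmbed, Fintype.sum_sum_type, Fin.sum_univ_two]

lemma armEmbed_inl_mul_armEmbed_inr (b : Bool) (x₀ y₀ : ℝ) (x y : ι → ℝ) (k k' : ι) :
    armEmbed b x₀ x (Sum.inr (Sum.inl k)) * armEmbed b y₀ y (Sum.inr (Sum.inr k')) = 0 := by
  cases b <;> simp [armEmbed]

end Arms

section Indicator

variable (R : Type*) [Semiring R] {ι β : Type*} [DecidableEq β]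

def indicatorMatrix (g : ι → β) : Matrix ι β R := of fun i b => if g i = b then 1 else 0

lemma indicatorMatrix_mul_apply [Fintype β] {γ : Type*} (g : ι → β) (A : Matrix β γ R)
    (i : ι) (c : γ) : (indicatorMatrix R g * A) i c = A (g i) c := by
  simp [indicatorMatrix, mul_apply]

lemma transpose_indicatorMatrix_mul_self [Fintype ι] (g : ι → β) :
    (indicatorMatrix R g)ᵀ * indicatorMatrix R g = diagonal fun b => (#{i | g i = b} : R) := by
  ext b b'
  by_cases h : b = b'
  · subst h
    simp [indicatorMatrix, mul_apply, ← ite_and, Finset.sum_boole]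
  · simp only [indicatorMatrix, mul_apply, transpose_apply, of_apply, diagonal_apply_ne _ h]
    refine Finset.sum_eq_zero fun i _ => ?_
    by_cases hb : g i = b
    · simp [hb, h]
    · simp [hb]

end Indicator

lemma Matrix.inv_transpose_mul_diagonal_mul {m ι K : Type*} [Fintype m] [DecidableEq m]
    [Fintype ι] [DecidableEq ι] [Field K] {C : Matrix ι m K} {C' : Matrix m ι K}
    (hCC' : C * C' = 1) (hC'C : C' * C = 1) {d : ι → K} (hd : ∀ i, d i ≠ 0) :
    (Cᵀ * diagonal d * C)⁻¹ = C' * diagonal d⁻¹ * C'ᵀ := by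
  refine inv_eq_right_inv ?_
  calc Cᵀ * diagonal d * C * (C' * diagonal d⁻¹ * C'ᵀ)
      = Cᵀ * (diagonal d * (C * C') * diagonal d⁻¹) * C'ᵀ := by simp only [Matrix.mul_assoc]
    _ = (C' * C)ᵀ := by
      rw [hCC', Matrix.mul_one, diagonal_mul_diagonal, transpose_mul]
      simp [hd]
    _ = 1 := by rw [hC'C, transpose_one]

lemma Matrix.mul_diagonal_mul_transpose_apply {m ι R : Type*} [Fintype ι] [DecidableEq ι]
    [CommSemiring R] (A : Matrix m ι R) (d : ι → R) (i j : m) :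
    (A * diagonal d * Aᵀ) i j = ∑ k, A i k * d k * A j k := by
  rw [mul_apply]
  simp only [mul_diagonal, transpose_apply]

section Design

variable (J L : ℕ)

lemma designX_apply (n : ℕ) (z : Fin n → Stratum J L) (δ : Fin n → Bool) (i : Fin n) :
    designX J L n z δ i = armEmbed (δ i) 1 (dummy J L (z i)) := by
  funext c
  rcases c with a | k | k <;> rfl

def cellDesign : Matrix (Bool × Stratum J L) (Cols J L) ℝ :=
  of fun bs => armEmbed bs.1 1 (dummy J L bs.2)

def cellDual : Matrix (Cols J L) (Bool × Stratum J L) ℝ :=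
  of fun c bs => armEmbed bs.1 (strataConst bs.2) (strataCoef bs.2) c

lemma cellDesign_mul_cellDual : cellDesign J L * cellDual J L = 1 := by
  ext ⟨b, s⟩ ⟨b', s'⟩
  simp only [mul_apply, cellDesign, cellDual, of_apply]
  rw [sum_armEmbed_mul_armEmbed, one_mul, strataConst_add_sum_ite_val_eq_add_one_mul_strataCoef]
  simp [one_apply, ite_and]

lemma cellDual_mul_cellDesign : cellDual J L * cellDesign J L = 1 :=
  (mul_eq_one_comm_of_equiv (Fintype.equivOfCardEq (by simp; ring))).mp
    (cellDesign_mul_cellDual J L)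

lemma designX_eq_indicatorMatrix_mul_cellDesign (n : ℕ) (z : Fin n → Stratum J L)
    (δ : Fin n → Bool) :
    designX J L n z δ = indicatorMatrix ℝ (fun i => (δ i, z i)) * cellDesign J L := by
  ext i c
  rw [indicatorMatrix_mul_apply, designX_apply]
  rfl

lemma transpose_designX_mul_designX (n : ℕ) (z : Fin n → Stratum J L) (δ : Fin n → Bool) :
    (designX J L n z δ)ᵀ * designX J L n z δ =
      (cellDesign J L)ᵀ * diagonal (fun bs => (#{i | (δ i, z i) = bs} : ℝ)) *
        cellDesign J L := by
  rw [designX_eq_indicatorMatrix_mul_cellDesign, transpose_mul, Matrix.mul_assoc,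
    ← Matrix.mul_assoc _ (indicatorMatrix ℝ _), transpose_indicatorMatrix_mul_self,
    Matrix.mul_assoc]

lemma card_cell_true (n : ℕ) (z : Fin n → Stratum J L) (δ : Fin n → Bool) (s : Stratum J L) :
    #{i | (δ i, z i) = (true, s)} = strNA J L n z δ s := by
  simp only [strNA, Prod.ext_iff, and_comm]

lemma strNA_add_card_cell_false (n : ℕ) (z : Fin n → Stratum J L) (δ : Fin n → Bool)
    (s : Stratum J L) :
    strNA J L n z δ s + #{i | (δ i, z i) = (false, s)} = strN J L n z s := by
  rw [strN, ← card_filter_add_card_filter_not (s := univ.filter fun i => z i = s)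
    (fun i => δ i = true), filter_filter, filter_filter, strNA]
  congr 2
  ext i
  simp [Prod.ext_iff, and_comm]

lemma card_cell_ne_zero (n : ℕ) (z : Fin n → Stratum J L) (δ : Fin n → Bool)
    (hA : ∀ s, 1 ≤ strNA J L n z δ s) (hB : ∀ s, strNA J L n z δ s + 1 ≤ strN J L n z s)
    (bs : Bool × Stratum J L) : #{i | (δ i, z i) = bs} ≠ 0 := by
  rcases bs with ⟨_ | _, s⟩
  · have := strNA_add_card_cell_false J L n z δ s
    have := hB s
    omega
  · have := hA s
    rw [card_cell_true]
    omega

lemma strataConst_eq (s : Stratum J L) : strataConst s = if s = (0, 0) then 1 else 0 := by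
  simp only [strataConst, levelConst, ite_zero_mul_ite_zero, one_mul, Prod.ext_iff]

lemma cellDual_inl_zero (bs : Bool × Stratum J L) :
    cellDual J L (Sum.inl 0) bs = if bs = (true, (0, 0)) then 1 else 0 := by
  rcases bs with ⟨_ | _, s⟩ <;> simp [cellDual, armEmbed, strataConst_eq]

lemma cellDual_inl_one (bs : Bool × Stratum J L) :
    cellDual J L (Sum.inl 1) bs = if bs = (false, (0, 0)) then 1 else 0 := by
  rcases bs with ⟨_ | _, s⟩ <;> simp [cellDual, armEmbed, strataConst_eq]

variable (e : Bool × Stratum J L → ℝ)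

lemma cellDual_conj_inl_zero :
    (cellDual J L * diagonal e * (cellDual J L)ᵀ) (Sum.inl 0) (Sum.inl 0) = e (true, (0, 0)) := by
  simp [mul_diagonal_mul_transpose_apply, cellDual_inl_zero]

lemma cellDual_conj_inl_one :
    (cellDual J L * diagonal e * (cellDual J L)ᵀ) (Sum.inl 1) (Sum.inl 1) = e (false, (0, 0)) := by
  simp [mul_diagonal_mul_transpose_apply, cellDual_inl_one]

lemma cellDual_conj_armA_armB (k k' : Idx J L) :
    (cellDual J L * diagonal e * (cellDual J L)ᵀ) (Sum.inr (Sum.inl k)) (Sum.inr (Sum.inr k')) =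
      0 := by
  rw [mul_diagonal_mul_transpose_apply]
  refine Finset.sum_eq_zero fun bs _ => ?_
  rw [mul_right_comm, cellDual, of_apply, of_apply, armEmbed_inl_mul_armEmbed_inr, zero_mul]

lemma cellDual_conj_armB_armA (k k' : Idx J L) :
    (cellDual J L * diagonal e * (cellDual J L)ᵀ) (Sum.inr (Sum.inr k)) (Sum.inr (Sum.inl k')) =
      0 := by
  rw [mul_diagonal_mul_transpose_apply]
  refine Finset.sum_eq_zero fun bs _ => ?_
  rw [mul_comm, ← mul_assoc, cellDual, of_apply, of_apply, armEmbed_inl_mul_armEmbed_inr,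
    zero_mul]

end Design

section Contrasts

variable {J L : ℕ} (M : Matrix (Cols J L) (Cols J L) ℝ)

lemma selD_apply (c : Cols J L) (q : Idx J L ⊕ Idx J L) :
    selD J L c q = if c = Sum.inr q then 1 else 0 := by
  rcases c with a | k <;> simp [selD]

lemma selE_apply (c : Cols J L) (k : Idx J L) :
    selE J L c k =
      (if c = Sum.inr (Sum.inl k) then 1 else 0) - (if c = Sum.inr (Sum.inr k) then 1 else 0) := by
  rcases c with a | k' | k' <;> simp [selE, neg_ite]

lemma trace_transpose_selD_mul_mul_selD :
    ((selD J L)ᵀ * M * selD J L).trace = ∑ q, M (Sum.inr q) (Sum.inr q) := by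
  simp [trace, mul_apply, selD_apply]

lemma trace_transpose_selE_mul_mul_selE :
    ((selE J L)ᵀ * M * selE J L).trace =
      ∑ k, (M (Sum.inr (Sum.inl k)) (Sum.inr (Sum.inl k)) -
        M (Sum.inr (Sum.inl k)) (Sum.inr (Sum.inr k)) -
        M (Sum.inr (Sum.inr k)) (Sum.inr (Sum.inl k)) +
        M (Sum.inr (Sum.inr k)) (Sum.inr (Sum.inr k))) := by
  refine Finset.sum_congr rfl fun k _ => ?_
  simp only [diag_apply, mul_apply, transpose_apply, selE_apply, sub_mul, mul_sub, ite_mul, mul_ite,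
    one_mul, mul_one, zero_mul, mul_zero, Finset.sum_sub_distrib, Finset.sum_ite_eq',
    Finset.mem_univ, if_true]
  ring

lemma trace_eq_add_trace_transpose_selD_mul_mul_selD :
    M.trace = M (Sum.inl 0) (Sum.inl 0) + M (Sum.inl 1) (Sum.inl 1) +
      ((selD J L)ᵀ * M * selD J L).trace := by
  rw [trace_transpose_selD_mul_mul_selD, trace, Fintype.sum_sum_type, Fin.sum_univ_two]
  rfl

end Contrasts

theorem C4_eq_C5_general (J L n : ℕ)
    (z : Fin n → Stratum J L) (δ : Fin n → Bool)
    (hA : ∀ s : Stratum J L, 1 ≤ strNA J L n z δ s)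
    (hB : ∀ s : Stratum J L, strNA J L n z δ s + 1 ≤ strN J L n z s) :
    ((selD J L)ᵀ * ((designX J L n z δ)ᵀ * designX J L n z δ)⁻¹ * selD J L).trace =
        ((selE J L)ᵀ * ((designX J L n z δ)ᵀ * designX J L n z δ)⁻¹ * selE J L).trace ∧
      ((selD J L)ᵀ * ((designX J L n z δ)ᵀ * designX J L n z δ)⁻¹ * selD J L).trace =
        (((designX J L n z δ)ᵀ * designX J L n z δ)⁻¹).trace -
          (strN J L n z (0, 0) : ℝ) /
            ((strNA J L n z δ (0, 0) : ℝ) *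
              ((strN J L n z (0, 0) : ℝ) - (strNA J L n z δ (0, 0) : ℝ))) := by
  set cnt : Bool × Stratum J L → ℝ := fun bs => #{i | (δ i, z i) = bs}
  have hcntA : cnt (true, (0, 0)) = strNA J L n z δ (0, 0) := by
    simp only [cnt, card_cell_true]
  have hstrN : (strN J L n z (0, 0) : ℝ) = strNA J L n z δ (0, 0) + cnt (false, (0, 0)) := by
    simp only [cnt]
    exact_mod_cast (strNA_add_card_cell_false J L n z δ (0, 0)).symm
  have hcnt : ∀ bs, cnt bs ≠ 0 := fun bs =>
    Nat.cast_ne_zero.mpr (card_cell_ne_zero J L n z δ hA hB bs)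
  rw [transpose_designX_mul_designX, inv_transpose_mul_diagonal_mul (cellDesign_mul_cellDual J L)
    (cellDual_mul_cellDesign J L) hcnt]
  refine ⟨?_, ?_⟩
  · rw [trace_transpose_selD_mul_mul_selD, trace_transpose_selE_mul_mul_selE,
      Fintype.sum_sum_type, ← sum_add_distrib]
    simp [cellDual_conj_armA_armB, cellDual_conj_armB_armA]
  · rw [trace_eq_add_trace_transpose_selD_mul_mul_selD _, cellDual_conj_inl_zero,
      cellDual_conj_inl_one, Pi.inv_apply, Pi.inv_apply, hstrN, ← hcntA,
      add_sub_cancel_left]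
    have h₁ := hcnt (true, (0, 0))
    have h₂ := hcnt (false, (0, 0))
    field_simp
    ring

/-- Criteria C4 and C5 coincide (Proposition 3.1):
`tr(Dᵗ(XᵗX)⁻¹D) = tr(Eᵗ(XᵗX)⁻¹E) = tr((XᵗX)⁻¹) − N(0,0)/(Ñ(0,0)(N(0,0)−Ñ(0,0)))`. -/
theorem C4_eq_C5 (J L n : ℕ) (hJ : 1 ≤ J) (hL : 1 ≤ L) (hn : 1 ≤ n)
    (z : Fin n → Stratum J L) (δ : Fin n → Bool)
    (hA : ∀ s : Stratum J L, 1 ≤ strNA J L n z δ s)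
    (hB : ∀ s : Stratum J L, strNA J L n z δ s + 1 ≤ strN J L n z s) :
    ((selD J L)ᵀ * ((designX J L n z δ)ᵀ * designX J L n z δ)⁻¹ * selD J L).trace =
        ((selE J L)ᵀ * ((designX J L n z δ)ᵀ * designX J L n z δ)⁻¹ * selE J L).trace ∧
      ((selD J L)ᵀ * ((designX J L n z δ)ᵀ * designX J L n z δ)⁻¹ * selD J L).trace =
        (((designX J L n z δ)ᵀ * designX J L n z δ)⁻¹).trace -
          (strN J L n z (0, 0) : ℝ) /
            ((strNA J L n z δ (0, 0) : ℝ) *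
              ((strN J L n z (0, 0) : ℝ) - (strNA J L n z δ (0, 0) : ℝ))) :=
  C4_eq_C5_general J L n z δ hA hB
end
end

section
/- Trace of the inverse information block (Appendix, proof of Proposition 3.1): Under the stated hypothesis, with Ω_A = Σ_{i : δ_i = 1} f(z_i)·f(z_i)ᵗ, one has tr(Ω_A⁻¹) = Σ_{j=1}^{J} Σ_{l=1}^{L} 1/Ñ(j,l) + (L+1)·Σ_{j=1}^{J} 1/Ñ(j,0) + (J+1)·Σ_{l=1}^{L} 1/Ñ(0,l). -/
open Matrix Finset

noncomputable section

/-- The treatment-`A` information block `Ω_A = Σ_{i : δ_i = 1} f(z_i) f(z_i)ᵗ`. -/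
def OmegaA (J L n : ℕ) (z : Fin n → Stratum J L) (δ : Fin n → Bool) :
    Matrix (Idx J L) (Idx J L) ℝ :=
  ∑ i : Fin n,
    if δ i then Matrix.vecMulVec (dummy J L (z i)) (dummy J L (z i)) else 0

/-- The vector `u = Σ_{i : δ_i = 1} f(z_i)`. -/
def uA (J L n : ℕ) (z : Fin n → Stratum J L) (δ : Fin n → Bool) : Idx J L → ℝ :=
  ∑ i : Fin n, if δ i then dummy J L (z i) else 0

/-!
Group the patients by stratum: `Ω_A = Σ_s Ñ(s) f(s) f(s)ᵗ`, and the reference stratum `(0,0)` is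
coded by `0`. The remaining `p` strata are indexed by the coordinates themselves, so
`Ω_A = F D Fᵗ` with `D = diag Ñ` and `F` the square matrix whose columns are their codings.
`F = 1 + E`, where `E` sends each interaction coordinate `(j,l)` to its margins `j` and `l`;
as `E² = 0`, `F⁻¹ = 1 - E`, hence `tr Ω_A⁻¹ = Σ_k Ñ_k⁻¹ ‖(1 - E)_k‖²`. The row of `1 - E` at
a margin `j` has `L + 1` nonzero entries `±1`, at a margin `l` it has `J + 1`, and at an
interaction only its diagonal entry.
-/

namespace Matrix

variable {ι R : Type*} [Fintype ι] [DecidableEq ι]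

theorem mul_diagonal_mul_transpose_eq_sum [CommSemiring R] (A : Matrix ι ι R) (d : ι → R) :
    A * diagonal d * Aᵀ = ∑ k, d k • vecMulVec (Aᵀ k) (Aᵀ k) := by
  ext i j
  rw [mul_apply]
  simp only [mul_diagonal, transpose_apply, sum_apply, smul_apply, vecMulVec_apply, smul_eq_mul]
  exact Finset.sum_congr rfl fun k _ => by ring

theorem inv_one_add_of_mul_self_eq_zero [CommRing R] {E : Matrix ι ι R} (hE : E * E = 0) :
    (1 + E)⁻¹ = 1 - E :=
  inv_eq_left_inv <| by
    rw [show (1 - E) * (1 + E) = 1 - E * E by noncomm_ring, hE, sub_zero]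

theorem inv_diagonal_of_ne_zero [Field R] {d : ι → R} (hd : ∀ k, d k ≠ 0) :
    (diagonal d)⁻¹ = diagonal d⁻¹ :=
  inv_eq_left_inv <| by
    rw [diagonal_mul_diagonal, ← diagonal_one]
    exact congrArg diagonal (funext fun k => inv_mul_cancel₀ (hd k))

theorem trace_transpose_mul_diagonal_mul [CommSemiring R] (C : Matrix ι ι R) (d : ι → R) :
    trace (Cᵀ * (diagonal d * C)) = ∑ k, d k * (C k ⬝ᵥ C k) := by
  rw [trace_mul_comm, Matrix.mul_assoc]
  refine Finset.sum_congr rfl fun k _ => ?_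
  rw [diag_apply, diagonal_mul]
  rfl

theorem trace_inv_mul_diagonal_mul_transpose [Field R] {B C : Matrix ι ι R} (hB : B⁻¹ = C)
    {d : ι → R} (hd : ∀ k, d k ≠ 0) :
    trace ((B * diagonal d * Bᵀ)⁻¹) = ∑ k, (d k)⁻¹ * (C k ⬝ᵥ C k) := by
  rw [mul_inv_rev, mul_inv_rev, ← transpose_nonsing_inv, hB, inv_diagonal_of_ne_zero hd,
    trace_transpose_mul_diagonal_mul]
  rfl

end Matrix

def idxStratum (J L : ℕ) : Idx J L → Stratum J L
  | Sum.inl j => (j.succ, 0)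
  | Sum.inr (Sum.inl l) => (0, l.succ)
  | Sum.inr (Sum.inr q) => (q.1.succ, q.2.succ)

def marginIncidence (J L : ℕ) : Matrix (Idx J L) (Idx J L) ℝ :=
  of fun k k' =>
    match k, k' with
    | Sum.inl j, Sum.inr (Sum.inr q) => if q.1 = j then 1 else 0
    | Sum.inr (Sum.inl l), Sum.inr (Sum.inr q) => if q.2 = l then 1 else 0
    | _, _ => 0

theorem marginIncidence_mul_self (J L : ℕ) : marginIncidence J L * marginIncidence J L = 0 := by
  ext k k''
  refine Finset.sum_eq_zero fun k' _ => ?_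
  rcases k' with j' | l' | q' <;> rcases k with j | l | q <;> rcases k'' with a | b | c <;>
    simp [marginIncidence]

theorem dummy_zero (J L : ℕ) : dummy J L 0 = 0 := by
  funext k
  rcases k with j | l | q <;> simp [dummy]

theorem dummy_idxStratum (J L : ℕ) (k : Idx J L) :
    dummy J L (idxStratum J L k) = (1 + marginIncidence J L)ᵀ k := by
  funext k'
  rcases k with j | l | q <;> rcases k' with j' | l' | q' <;>
    simp [dummy, idxStratum, marginIncidence, one_apply, Fin.val_succ, Fin.ext_iff,
      Prod.ext_iff, eq_comm, And.comm]

theorem sum_stratum_eq_sum_idx {M : Type*} [AddCommMonoid M] (J L : ℕ) (g : Stratum J L → M)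
    (h0 : g 0 = 0) : ∑ s, g s = ∑ k, g (idxStratum J L k) := by
  rw [← (Equiv.prodCongr (finSuccEquiv J) (finSuccEquiv L)).symm.sum_comp g]
  simp only [Fintype.sum_prod_type, Fintype.sum_option, Fintype.sum_sum_type,
    Equiv.prodCongr_symm, Equiv.prodCongr_apply, Prod.map, finSuccEquiv_symm_none,
    finSuccEquiv_symm_some, idxStratum]
  rw [show ((0, 0) : Stratum J L) = 0 from rfl, h0, Finset.sum_add_distrib]
  abel

theorem OmegaA_eq_sum_strNA (J L n : ℕ) (z : Fin n → Stratum J L) (δ : Fin n → Bool) :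
    OmegaA J L n z δ =
      ∑ s, (strNA J L n z δ s : ℝ) • vecMulVec (dummy J L s) (dummy J L s) := by
  have hsplit : ∀ i, (if δ i then vecMulVec (dummy J L (z i)) (dummy J L (z i)) else 0) =
      ∑ s, if z i = s ∧ δ i = true then vecMulVec (dummy J L s) (dummy J L s) else 0 := by
    intro i
    cases δ i <;> simp
  rw [OmegaA, Finset.sum_congr rfl fun i _ => hsplit i, Finset.sum_comm]
  refine Finset.sum_congr rfl fun s _ => ?_
  rw [Finset.sum_ite, Finset.sum_const, Finset.sum_const_zero, add_zero, strNA,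
    Nat.cast_smul_eq_nsmul]

theorem OmegaA_eq_mul_diagonal_mul_transpose (J L n : ℕ) (z : Fin n → Stratum J L)
    (δ : Fin n → Bool) :
    OmegaA J L n z δ = (1 + marginIncidence J L) *
      diagonal (fun k => (strNA J L n z δ (idxStratum J L k) : ℝ)) *
      (1 + marginIncidence J L)ᵀ := by
  rw [OmegaA_eq_sum_strNA, mul_diagonal_mul_transpose_eq_sum,
    sum_stratum_eq_sum_idx J L _ (by simp [dummy_zero])]
  simp only [dummy_idxStratum]

section RowNorms

variable (J L : ℕ)

theorem dotProduct_self_one_sub_marginIncidence_inl (j : Fin J) :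
    (1 - marginIncidence J L) (Sum.inl j) ⬝ᵥ (1 - marginIncidence J L) (Sum.inl j) = L + 1 := by
  simp [dotProduct, marginIncidence, one_apply, Fintype.sum_sum_type, Fintype.sum_prod_type,
    add_comm]

theorem dotProduct_self_one_sub_marginIncidence_inr_inl (l : Fin L) :
    (1 - marginIncidence J L) (Sum.inr (Sum.inl l)) ⬝ᵥ
      (1 - marginIncidence J L) (Sum.inr (Sum.inl l)) = J + 1 := by
  simp [dotProduct, marginIncidence, one_apply, Fintype.sum_sum_type, Fintype.sum_prod_type,
    add_comm]

theorem dotProduct_self_one_sub_marginIncidence_inr_inr (q : Fin J × Fin L) :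
    (1 - marginIncidence J L) (Sum.inr (Sum.inr q)) ⬝ᵥ
      (1 - marginIncidence J L) (Sum.inr (Sum.inr q)) = 1 := by
  simp [dotProduct, marginIncidence, one_apply]

end RowNorms

theorem trace_OmegaA_inv_general (J L n : ℕ)
    (z : Fin n → Stratum J L) (δ : Fin n → Bool)
    (hA : ∀ s : Stratum J L, 1 ≤ strNA J L n z δ s) :
    ((OmegaA J L n z δ)⁻¹).trace =
      (∑ j : Fin J, ∑ l : Fin L, 1 / (strNA J L n z δ (j.succ, l.succ) : ℝ))
        + ((L : ℝ) + 1) * ∑ j : Fin J, 1 / (strNA J L n z δ (j.succ, 0) : ℝ)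
        + ((J : ℝ) + 1) * ∑ l : Fin L, 1 / (strNA J L n z δ (0, l.succ) : ℝ) := by
  have hN (k : Idx J L) : (strNA J L n z δ (idxStratum J L k) : ℝ) ≠ 0 := by
    have := hA (idxStratum J L k)
    positivity
  rw [OmegaA_eq_mul_diagonal_mul_transpose, trace_inv_mul_diagonal_mul_transpose
    (inv_one_add_of_mul_self_eq_zero (marginIncidence_mul_self J L)) hN,
    Fintype.sum_sum_type, Fintype.sum_sum_type, Fintype.sum_prod_type]
  simp only [dotProduct_self_one_sub_marginIncidence_inl,
    dotProduct_self_one_sub_marginIncidence_inr_inl,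
    dotProduct_self_one_sub_marginIncidence_inr_inr, idxStratum, mul_one, one_div,
    ← Finset.sum_mul]
  ring

/-- Trace of the inverse information block (Appendix, proof of Proposition 3.1):
`tr(Ω_A⁻¹) = Σ_j Σ_l 1/Ñ(j,l) + (L+1) Σ_j 1/Ñ(j,0) + (J+1) Σ_l 1/Ñ(0,l)`. -/
theorem trace_OmegaA_inv (J L n : ℕ) (hJ : 1 ≤ J) (hL : 1 ≤ L) (hn : 1 ≤ n)
    (z : Fin n → Stratum J L) (δ : Fin n → Bool)
    (hA : ∀ s : Stratum J L, 1 ≤ strNA J L n z δ s) :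
    ((OmegaA J L n z δ)⁻¹).trace =
      (∑ j : Fin J, ∑ l : Fin L, 1 / (strNA J L n z δ (j.succ, l.succ) : ℝ))
        + ((L : ℝ) + 1) * ∑ j : Fin J, 1 / (strNA J L n z δ (j.succ, 0) : ℝ)
        + ((J : ℝ) + 1) * ∑ l : Fin L, 1 / (strNA J L n z δ (0, l.succ) : ℝ) :=
  trace_OmegaA_inv_general J L n z δ hA
end
end

section
/- Remark 6.2 (constrained optimization as a special case of the compound approach): Assume θ(s) ≠ 0 for every s ∈ S, and define the standardized efficiencies Ψ_E(π) = Φ_E(π)/Φ_E* and Ψ_I(π) = Φ_I*/Φ_I(π) = 4^K·Π_{s∈S} π(s)(1−π(s)). Then for every constant C ∈ (0,1): (a) there exists a unique π^C ∈ (0,1)^S maximizing Ψ_E over the constraint set {π ∈ (0,1)^S : Ψ_I(π) ≥ C}; (b) the constraint is active, i.e. Ψ_I(π^C) = C; and (c) there exists ω_C ∈ (0,1) such that π^C equals the optimal compound target π*_{ω_C}, the unique minimizer of Ψ_{ω_C}. -/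
/-! `Φ_E` is affine with nonzero gradient `L = (p(s) θ(s))_s`, and `1 / Ψ_I` is convex
on `(0,1)^S` because `Ψ_I` is a product of the log-concave factors `4x(1-x)`. A maximizer `π^C` of
`Φ_E` on the compact feasible set exists, and the constraint is active there, since a nonconstant
affine function has no unconstrained local maximum. Two distinct maximizers are impossible: by
strict log-concavity their midpoint would be a maximizer with inactive constraint. The Lagrange
multiplier rule gives `Ψ_I'(π^C) = c • L`; the tangent inequality of `1 / Ψ_I` at `π^C`, evaluated
at the balanced allocation, forces `c < 0`. Choosing `ω` so that the tangent slopes of `ω / Ψ_E`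
and `(1 - ω) / Ψ_I` at `π^C` cancel, the sum of the two tangent inequalities shows that `π^C`
minimizes `Ψ_ω = ω / Ψ_E + (1 - ω) / Ψ_I` on `(0,1)^S`. -/

open Finset

noncomputable section

/-- The ethical criterion `Φ_E(π) = Σ_s p(s)·c_s(π(s))`, where `c_s(x) = θ(s)·x` if
`θ(s) > 0`, `c_s(x) = −θ(s)·(1−x)` if `θ(s) < 0`, and `c_s(x) = 0` if `θ(s) = 0`. -/
def PhiE (S : Type*) [Fintype S] (θ p : S → ℝ) (π : S → ℝ) : ℝ :=
  ∑ s : S, p s *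
    (if 0 < θ s then θ s * π s else if θ s < 0 then -θ s * (1 - π s) else 0)

/-- The supremum `Φ_E* = Σ_s p(s)·|θ(s)|` of the ethical criterion. -/
def PhiEstar (S : Type*) [Fintype S] (θ p : S → ℝ) : ℝ :=
  ∑ s : S, p s * |θ s|

/-- The D-optimality inferential criterion `Φ_I(π) = ∏_s (π(s)(1−π(s)))⁻¹`. -/
def PhiI (S : Type*) [Fintype S] (π : S → ℝ) : ℝ :=
  ∏ s : S, (π s * (1 - π s))⁻¹

/-- The minimum `Φ_I* = 4^K` of the inferential criterion over `(0,1)^S`. -/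
def PhiIstar (S : Type*) [Fintype S] : ℝ :=
  4 ^ Fintype.card S

/-- The open box `(0,1)^S` of admissible allocations. -/
def Dset (S : Type*) : Set (S → ℝ) :=
  Set.univ.pi fun _ : S => Set.Ioo (0 : ℝ) 1

/-- The compound criterion `Ψ_ω(π) = ω·Φ_E*/Φ_E(π) + (1−ω)·Φ_I(π)/Φ_I*`. -/
def Psi (S : Type*) [Fintype S] (ω : ℝ) (θ p : S → ℝ) (π : S → ℝ) : ℝ :=
  ω * PhiEstar S θ p / PhiE S θ p π + (1 - ω) * PhiI S π / PhiIstar S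

/-- `π` is the optimal compound target `π*_ω(θ,p)`: it minimizes `Ψ_ω` over `(0,1)^S`.
(By the paper's Theorem 5.1 this minimizer exists and is unique.) -/
def IsCompoundTarget (S : Type*) [Fintype S] (ω : ℝ) (θ p : S → ℝ) (π : S → ℝ) : Prop :=
  π ∈ Dset S ∧ ∀ π' ∈ Dset S, Psi S ω θ p π ≤ Psi S ω θ p π'

/-- The standardized ethical efficiency `Ψ_E(π) = Φ_E(π)/Φ_E*`. -/
def PsiE (S : Type*) [Fintype S] (θ p : S → ℝ) (π : S → ℝ) : ℝ :=
  PhiE S θ p π / PhiEstar S θ p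

/-- The standardized inferential efficiency `Ψ_I(π) = Φ_I*/Φ_I(π) = 4^K·∏_s π(s)(1−π(s))`. -/
def PsiI (S : Type*) [Fintype S] (π : S → ℝ) : ℝ :=
  (4 : ℝ) ^ Fintype.card S * ∏ s : S, π s * (1 - π s)

open Topology

theorem ConvexOn.add_fderiv_le {E : Type*} [NormedAddCommGroup E] [NormedSpace ℝ E]
    {s : Set E} {f : E → ℝ} {f' : E →L[ℝ] ℝ} {x y : E} (hf : ConvexOn ℝ s f)
    (hx : x ∈ s) (hy : y ∈ s) (hd : HasFDerivAt f f' x) :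
    f x + f' (y - x) ≤ f y := by
  have hline : HasDerivAt (f ∘ AffineMap.lineMap (k := ℝ) x y) (f' (y - x)) 0 := by
    refine HasFDerivAt.comp_hasDerivAt (0 : ℝ) ?_ AffineMap.hasDerivAt_lineMap
    simpa using hd
  have h01 := (hf.comp_affineMap (AffineMap.lineMap x y)).le_slope_of_hasDerivAt
    (x := 0) (y := 1) (by simpa using hx) (by simpa using hy) one_pos hline
  rw [slope_def_field] at h01
  simp only [Function.comp_apply, AffineMap.lineMap_apply_zero, AffineMap.lineMap_apply_one,
    sub_zero, div_one] at h01
  linarith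

theorem inv_sub_div_sq_le_inv {u₀ u : ℝ} (hu₀ : 0 < u₀) (hu : 0 < u) :
    u₀⁻¹ - (u - u₀) / u₀ ^ 2 ≤ u⁻¹ := by
  have key : u⁻¹ - (u₀⁻¹ - (u - u₀) / u₀ ^ 2) = (u - u₀) ^ 2 / (u * u₀ ^ 2) := by
    field_simp
    ring
  have : 0 ≤ (u - u₀) ^ 2 / (u * u₀ ^ 2) := by positivity
  linarith

theorem weighted_geom_mean_le_quad {x y a b : ℝ} (hx : x ∈ Set.Icc (0 : ℝ) 1)
    (hy : y ∈ Set.Icc (0 : ℝ) 1) (ha : 0 ≤ a) (hb : 0 ≤ b) (hab : a + b = 1) :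
    (4 * (x * (1 - x))) ^ a * (4 * (y * (1 - y))) ^ b ≤
      4 * ((a * x + b * y) * (1 - (a * x + b * y))) := by
  obtain ⟨hx0, hx1⟩ := hx
  obtain ⟨hy0, hy1⟩ := hy
  calc (4 * (x * (1 - x))) ^ a * (4 * (y * (1 - y))) ^ b
      ≤ a * (4 * (x * (1 - x))) + b * (4 * (y * (1 - y))) :=
        Real.geom_mean_le_arith_mean2_weighted ha hb (by nlinarith) (by nlinarith) hab
    _ ≤ 4 * ((a * x + b * y) * (1 - (a * x + b * y))) := by
        obtain rfl : b = 1 - a := by linarith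
        nlinarith [mul_nonneg (mul_nonneg ha hb) (sq_nonneg (x - y))]

theorem mul_le_quad_midpoint_sq {x y : ℝ} (hx : x ∈ Set.Icc (0 : ℝ) 1)
    (hy : y ∈ Set.Icc (0 : ℝ) 1) :
    4 * (x * (1 - x)) * (4 * (y * (1 - y))) ≤
      (4 * ((x + y) / 2 * (1 - (x + y) / 2))) ^ 2 := by
  obtain ⟨hx0, hx1⟩ := hx
  obtain ⟨hy0, hy1⟩ := hy
  nlinarith [sq_nonneg (x * (1 - x) - y * (1 - y)), mul_nonneg hx0 (sub_nonneg.2 hx1),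
    mul_nonneg hy0 (sub_nonneg.2 hy1), sq_nonneg (x - y)]

theorem mul_lt_quad_midpoint_sq {x y : ℝ} (hx : x ∈ Set.Icc (0 : ℝ) 1)
    (hy : y ∈ Set.Icc (0 : ℝ) 1) (hxy : x ≠ y) :
    4 * (x * (1 - x)) * (4 * (y * (1 - y))) <
      (4 * ((x + y) / 2 * (1 - (x + y) / 2))) ^ 2 := by
  obtain ⟨hx0, hx1⟩ := hx
  obtain ⟨hy0, hy1⟩ := hy
  have hd : 0 < (x - y) ^ 2 := by positivity
  nlinarith [sq_nonneg (x * (1 - x) - y * (1 - y)), mul_nonneg hx0 (sub_nonneg.2 hx1),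
    mul_nonneg hy0 (sub_nonneg.2 hy1)]

section Allocation

variable {S : Type*}

theorem mem_Dset_iff {π : S → ℝ} : π ∈ Dset S ↔ ∀ s, 0 < π s ∧ π s < 1 := by
  simp [Dset, Set.mem_pi]

theorem convex_Dset : Convex ℝ (Dset S) :=
  convex_pi fun _ _ => convex_Ioo 0 1

theorem const_half_mem_Dset : (fun _ => 1 / 2 : S → ℝ) ∈ Dset S :=
  mem_Dset_iff.2 fun _ => by norm_num

theorem mem_Icc_of_mem_Dset {π : S → ℝ} (hπ : π ∈ Dset S) (s : S) : π s ∈ Set.Icc (0 : ℝ) 1 :=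
  Set.Ioo_subset_Icc_self (hπ s (Set.mem_univ s))

theorem midpoint_mem_Dset {π₁ π₂ : S → ℝ} (h₁ : π₁ ∈ Dset S) (h₂ : π₂ ∈ Dset S) :
    (fun s => (π₁ s + π₂ s) / 2) ∈ Dset S :=
  mem_Dset_iff.2 fun s => by
    obtain ⟨a0, a1⟩ := mem_Dset_iff.1 h₁ s
    obtain ⟨b0, b1⟩ := mem_Dset_iff.1 h₂ s
    constructor <;> linarith

theorem quad_pos_of_mem_Dset {π : S → ℝ} (hπ : π ∈ Dset S) (s : S) :
    0 < 4 * (π s * (1 - π s)) := by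
  obtain ⟨h0, h1⟩ := mem_Dset_iff.1 hπ s
  nlinarith

variable [Fintype S]

theorem isOpen_Dset : IsOpen (Dset S) :=
  isOpen_set_pi Set.finite_univ fun _ _ => isOpen_Ioo

theorem psiI_eq_prod (π : S → ℝ) : PsiI S π = ∏ s, 4 * (π s * (1 - π s)) := by
  rw [PsiI, ← Finset.card_univ, ← Finset.prod_const, ← Finset.prod_mul_distrib]

theorem psiI_const_half : PsiI S (fun _ => 1 / 2) = 1 := by
  rw [psiI_eq_prod]
  norm_num

theorem psiI_pos {π : S → ℝ} (hπ : π ∈ Dset S) : 0 < PsiI S π := by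
  rw [psiI_eq_prod]
  exact Finset.prod_pos fun s _ => quad_pos_of_mem_Dset hπ s

theorem contDiff_psiI : ContDiff ℝ 1 (PsiI S) := by
  unfold PsiI
  fun_prop

theorem hasStrictFDerivAt_psiI (π : S → ℝ) :
    HasStrictFDerivAt (PsiI S) (fderiv ℝ (PsiI S) π) π :=
  contDiff_psiI.contDiffAt.hasStrictFDerivAt one_ne_zero

end Allocation

section Inferential

variable {S : Type*} [Fintype S]

theorem psiI_rpow_mul_rpow_le {x y : S → ℝ} (hx : x ∈ Dset S) (hy : y ∈ Dset S) {a b : ℝ}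
    (ha : 0 ≤ a) (hb : 0 ≤ b) (hab : a + b = 1) :
    PsiI S x ^ a * PsiI S y ^ b ≤ PsiI S (a • x + b • y) := by
  have hq : ∀ z ∈ Dset S, ∀ s ∈ univ, 0 ≤ 4 * (z s * (1 - z s)) := fun z hz s _ =>
    (quad_pos_of_mem_Dset hz s).le
  rw [psiI_eq_prod, psiI_eq_prod, psiI_eq_prod, ← Real.finsetProd_rpow _ _ (hq x hx),
    ← Real.finsetProd_rpow _ _ (hq y hy), ← Finset.prod_mul_distrib]
  refine Finset.prod_le_prod (fun s hs => ?_) (fun s _ => ?_)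
  · exact mul_nonneg (Real.rpow_nonneg (hq x hx s hs) a) (Real.rpow_nonneg (hq y hy s hs) b)
  · exact weighted_geom_mean_le_quad (mem_Icc_of_mem_Dset hx s) (mem_Icc_of_mem_Dset hy s)
      ha hb hab

theorem convexOn_inv_psiI : ConvexOn ℝ (Dset S) fun π => (PsiI S π)⁻¹ := by
  refine ⟨convex_Dset, fun x hx y hy a b ha hb hab => ?_⟩
  have hIx := psiI_pos hx
  have hIy := psiI_pos hy
  simp only [smul_eq_mul]
  calc (PsiI S (a • x + b • y))⁻¹ ≤ (PsiI S x ^ a * PsiI S y ^ b)⁻¹ :=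
        inv_anti₀ (by positivity) (psiI_rpow_mul_rpow_le hx hy ha hb hab)
    _ = (PsiI S x)⁻¹ ^ a * (PsiI S y)⁻¹ ^ b := by
        rw [mul_inv, Real.inv_rpow hIx.le, Real.inv_rpow hIy.le]
    _ ≤ a * (PsiI S x)⁻¹ + b * (PsiI S y)⁻¹ :=
        Real.geom_mean_le_arith_mean2_weighted ha hb (by positivity) (by positivity) hab

theorem inv_psiI_sub_le {π y : S → ℝ} (hπ : π ∈ Dset S) (hy : y ∈ Dset S) :
    (PsiI S π)⁻¹ - (PsiI S π ^ 2)⁻¹ * fderiv ℝ (PsiI S) π (y - π) ≤ (PsiI S y)⁻¹ := by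
  have hd := (hasDerivAt_inv (psiI_pos hπ).ne').comp_hasFDerivAt π
    (hasStrictFDerivAt_psiI π).hasFDerivAt
  have := convexOn_inv_psiI.add_fderiv_le hπ hy hd
  simpa [sub_eq_add_neg] using this

theorem lt_psiI_midpoint {C : ℝ} (hC : 0 < C) {π₁ π₂ : S → ℝ} (h₁ : π₁ ∈ Dset S)
    (h₂ : π₂ ∈ Dset S) (hC₁ : C ≤ PsiI S π₁) (hC₂ : C ≤ PsiI S π₂) (hne : π₁ ≠ π₂) :
    C < PsiI S (fun s => (π₁ s + π₂ s) / 2) := by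
  obtain ⟨s₀, hs₀⟩ := Function.ne_iff.1 hne
  have hprod : PsiI S π₁ * PsiI S π₂ < PsiI S (fun s => (π₁ s + π₂ s) / 2) ^ 2 := by
    rw [psiI_eq_prod, psiI_eq_prod, psiI_eq_prod, ← Finset.prod_mul_distrib, ← Finset.prod_pow]
    refine Finset.prod_lt_prod (fun s _ => ?_) (fun s _ => ?_) ⟨s₀, mem_univ _, ?_⟩
    · exact mul_pos (quad_pos_of_mem_Dset h₁ s) (quad_pos_of_mem_Dset h₂ s)
    · exact mul_le_quad_midpoint_sq (mem_Icc_of_mem_Dset h₁ s) (mem_Icc_of_mem_Dset h₂ s)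
    · exact mul_lt_quad_midpoint_sq (mem_Icc_of_mem_Dset h₁ s₀) (mem_Icc_of_mem_Dset h₂ s₀) hs₀
  have hC2 : C ^ 2 ≤ PsiI S π₁ * PsiI S π₂ := by
    rw [sq]; exact mul_le_mul hC₁ hC₂ hC.le (psiI_pos h₁).le
  exact lt_of_pow_lt_pow_left₀ 2 (psiI_pos (midpoint_mem_Dset h₁ h₂)).le (hC2.trans_lt hprod)

end Inferential

section Ethical

variable {S : Type*} [Fintype S] {θ p : S → ℝ}

def ethicalGradient (θ p : S → ℝ) : (S → ℝ) →L[ℝ] ℝ :=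
  ∑ s, (p s * θ s) • ContinuousLinearMap.proj s

theorem ethicalGradient_apply (v : S → ℝ) :
    ethicalGradient θ p v = ∑ s, p s * θ s * v s := by
  simp [ethicalGradient]

theorem phiE_eq_add_ethicalGradient (π : S → ℝ) :
    PhiE S θ p π = PhiE S θ p 0 + ethicalGradient θ p π := by
  rw [ethicalGradient_apply, PhiE, PhiE, ← Finset.sum_add_distrib]
  refine Finset.sum_congr rfl fun s _ => ?_
  simp only [Pi.zero_apply]
  split_ifs with hpos hneg
  · ring
  · ring
  · rw [le_antisymm (not_lt.1 hpos) (not_lt.1 hneg)]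
    ring

theorem hasStrictFDerivAt_phiE (π : S → ℝ) :
    HasStrictFDerivAt (PhiE S θ p) (ethicalGradient θ p) π := by
  rw [funext phiE_eq_add_ethicalGradient]
  exact (ethicalGradient θ p).hasStrictFDerivAt.const_add _

theorem continuous_phiE : Continuous (PhiE S θ p) :=
  continuous_iff_continuousAt.2 fun π => (hasStrictFDerivAt_phiE π).hasFDerivAt.continuousAt

theorem phiE_midpoint (π₁ π₂ : S → ℝ) :
    PhiE S θ p (fun s => (π₁ s + π₂ s) / 2) = (PhiE S θ p π₁ + PhiE S θ p π₂) / 2 := by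
  have hm : (fun s => (π₁ s + π₂ s) / 2) = (2⁻¹ : ℝ) • (π₁ + π₂) := by
    ext s
    simp only [Pi.smul_apply, Pi.add_apply, smul_eq_mul]
    ring
  rw [phiE_eq_add_ethicalGradient, hm, map_smul, map_add, phiE_eq_add_ethicalGradient π₁,
    phiE_eq_add_ethicalGradient π₂, smul_eq_mul]
  ring

variable [Nonempty S] (hp : ∀ s, 0 < p s) (hθ : ∀ s, θ s ≠ 0)
include hp hθ

theorem ethicalGradient_self_pos : 0 < ethicalGradient θ p θ := by
  rw [ethicalGradient_apply]
  refine Finset.sum_pos (fun s _ => ?_) univ_nonempty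
  rw [mul_assoc]
  exact mul_pos (hp s) (mul_self_pos.2 (hθ s))

theorem phiEstar_pos : 0 < PhiEstar S θ p :=
  Finset.sum_pos (fun s _ => mul_pos (hp s) (abs_pos.2 (hθ s))) univ_nonempty

theorem phiE_pos {π : S → ℝ} (hπ : π ∈ Dset S) : 0 < PhiE S θ p π := by
  refine Finset.sum_pos (fun s _ => mul_pos (hp s) ?_) univ_nonempty
  obtain ⟨h0, h1⟩ := mem_Dset_iff.1 hπ s
  rcases (hθ s).lt_or_gt with h | h
  · rw [if_neg h.not_gt, if_pos h]
    exact mul_pos (neg_pos.2 h) (sub_pos.2 h1)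
  · rw [if_pos h]
    exact mul_pos h h0

theorem psiE_pos {π : S → ℝ} (hπ : π ∈ Dset S) : 0 < PsiE S θ p π :=
  div_pos (phiE_pos hp hθ hπ) (phiEstar_pos hp hθ)

theorem psi_eq_div_psiE_add_div_psiI (ω : ℝ) {π : S → ℝ} (hπ : π ∈ Dset S) :
    Psi S ω θ p π = ω / PsiE S θ p π + (1 - ω) / PsiI S π := by
  have hE := phiE_pos hp hθ hπ
  have hEstar := phiEstar_pos hp hθ
  have hI := psiI_pos hπ
  rw [psiI_eq_prod] at hI
  rw [Psi, PsiE, PsiI, PhiI, Finset.prod_inv_distrib, PhiIstar]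
  field_simp

end Ethical

def feasibleSet (S : Type*) [Fintype S] (C : ℝ) : Set (S → ℝ) :=
  {π | π ∈ Dset S ∧ C ≤ PsiI S π}

section Constrained

variable {S : Type*} [Fintype S] {θ p : S → ℝ} {C : ℝ}

theorem feasibleSet_eq (hC : 0 < C) :
    feasibleSet S C = Set.univ.pi (fun _ => Set.Icc 0 1) ∩ {π | C ≤ PsiI S π} := by
  ext π
  refine ⟨fun ⟨hπ, hCπ⟩ => ⟨fun s _ => mem_Icc_of_mem_Dset hπ s, hCπ⟩,
    fun ⟨hbox, hCπ⟩ => ⟨fun s _ => ?_, hCπ⟩⟩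
  -- a coordinate on the boundary of `[0,1]` would make `Ψ_I` vanish
  have hfac : 4 * (π s * (1 - π s)) ≠ 0 := by
    have hprod : ∏ s, 4 * (π s * (1 - π s)) ≠ 0 := by
      rw [← psiI_eq_prod]
      exact (hC.trans_le hCπ).ne'
    exact Finset.prod_ne_zero_iff.1 hprod s (mem_univ s)
  obtain ⟨h0, h1⟩ := hbox s (Set.mem_univ s)
  refine ⟨h0.lt_of_ne ?_, h1.lt_of_ne ?_⟩ <;> rintro h <;> simp [← h] at hfac

theorem isCompact_feasibleSet (hC : 0 < C) : IsCompact (feasibleSet S C) := by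
  rw [feasibleSet_eq hC]
  exact (isCompact_univ_pi fun _ => isCompact_Icc).inter_right
    (isClosed_le continuous_const contDiff_psiI.continuous)

theorem exists_isMaxOn_phiE (θ p : S → ℝ) (hC0 : 0 < C) (hC1 : C ≤ 1) :
    ∃ π ∈ feasibleSet S C, IsMaxOn (PhiE S θ p) (feasibleSet S C) π :=
  (isCompact_feasibleSet hC0).exists_isMaxOn
    ⟨_, const_half_mem_Dset, by rwa [psiI_const_half]⟩
    continuous_phiE.continuousOn

variable [Nonempty S] (hp : ∀ s, 0 < p s) (hθ : ∀ s, θ s ≠ 0)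
include hp hθ

theorem psiI_eq_of_isMaxOn {π : S → ℝ} (hπ : π ∈ feasibleSet S C)
    (hmax : IsMaxOn (PhiE S θ p) (feasibleSet S C) π) : PsiI S π = C := by
  refine (hπ.2.eq_of_not_lt fun hlt => ?_).symm
  -- an inactive constraint would make `π` an unconstrained local maximum of the affine `Φ_E`
  have hnhds : feasibleSet S C ∈ 𝓝 π :=
    Filter.mem_of_superset
      ((isOpen_Dset.inter (isOpen_lt continuous_const contDiff_psiI.continuous)).mem_nhds
        ⟨hπ.1, hlt⟩)
      fun x hx => ⟨hx.1, hx.2.le⟩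
  have hzero := (hmax.localize.isLocalMax hnhds).hasFDerivAt_eq_zero
    (hasStrictFDerivAt_phiE π).hasFDerivAt
  have := ethicalGradient_self_pos hp hθ
  rw [hzero] at this
  exact this.false

theorem eq_of_isMaxOn (hC : 0 < C) {π₁ π₂ : S → ℝ} (h₁ : π₁ ∈ feasibleSet S C)
    (h₂ : π₂ ∈ feasibleSet S C) (hmax₁ : IsMaxOn (PhiE S θ p) (feasibleSet S C) π₁)
    (hmax₂ : IsMaxOn (PhiE S θ p) (feasibleSet S C) π₂) : π₁ = π₂ := by
  by_contra hne
  set m : S → ℝ := fun s => (π₁ s + π₂ s) / 2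
  have hm : C < PsiI S m := lt_psiI_midpoint hC h₁.1 h₂.1 h₁.2 h₂.2 hne
  have hmax : IsMaxOn (PhiE S θ p) (feasibleSet S C) m := by
    have heq : PhiE S θ p π₁ = PhiE S θ p π₂ := le_antisymm (hmax₂ h₁) (hmax₁ h₂)
    intro x hx
    rw [Set.mem_ofPred_eq, phiE_midpoint, ← heq, add_self_div_two]
    exact hmax₁ hx
  exact hm.ne' (psiI_eq_of_isMaxOn hp hθ ⟨midpoint_mem_Dset h₁.1 h₂.1, hm.le⟩ hmax)

theorem exists_neg_smul_of_isMaxOn (hC1 : C < 1) {π : S → ℝ} (hπ : π ∈ feasibleSet S C)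
    (hmax : IsMaxOn (PhiE S θ p) (feasibleSet S C) π) :
    ∃ c : ℝ, c < 0 ∧ fderiv ℝ (PsiI S) π = c • ethicalGradient θ p := by
  have hact := psiI_eq_of_isMaxOn hp hθ hπ hmax
  have hextr : IsLocalExtrOn (PhiE S θ p) {x | PsiI S x = PsiI S π} π := by
    refine Or.inr ?_
    filter_upwards [self_mem_nhdsWithin, nhdsWithin_le_nhds (isOpen_Dset.mem_nhds hπ.1)]
      with x hx hxD
    exact hmax ⟨hxD, by rw [hx, hact]⟩
  obtain ⟨a, b, hab, hsum⟩ := hextr.exists_multipliers_of_hasStrictFDerivAt_1d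
    (hasStrictFDerivAt_psiI π) (hasStrictFDerivAt_phiE π)
  have ha : a ≠ 0 := by
    rintro rfl
    have hb : b ≠ 0 := fun hb => hab (by rw [hb]; rfl)
    have := congr($hsum θ)
    simp only [zero_smul, zero_add, smul_apply, smul_eq_mul,
      zero_apply, mul_eq_zero] at this
    exact this.elim hb (ethicalGradient_self_pos hp hθ).ne'
  have hgrad : fderiv ℝ (PsiI S) π = (-b / a) • ethicalGradient θ p := by
    rw [← smul_right_injective _ ha |>.eq_iff, smul_smul, eq_neg_of_add_eq_zero_left hsum,
      mul_div_cancel₀ _ ha]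
    exact (neg_smul b _).symm
  refine ⟨-b / a, ?_, hgrad⟩
  by_contra! hc
  -- the balanced allocation is feasible, and the tangent bound for the convex `1 / Ψ_I`
  -- there would give `1 / C ≤ 1`
  have hhalf : ethicalGradient θ p ((fun _ => 1 / 2) - π) ≤ 0 := by
    have := hmax ⟨const_half_mem_Dset, by rw [psiI_const_half]; exact hC1.le⟩
    rw [Set.mem_ofPred_eq, phiE_eq_add_ethicalGradient, phiE_eq_add_ethicalGradient π] at this
    rw [map_sub]
    linarith
  have htangent := inv_psiI_sub_le hπ.1 (const_half_mem_Dset (S := S))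
  rw [hgrad, hact, psiI_const_half, smul_apply, smul_eq_mul] at htangent
  have hC0 : 0 < C := hact ▸ psiI_pos hπ.1
  have hslope : (C ^ 2)⁻¹ * (-b / a * ethicalGradient θ p ((fun _ => 1 / 2) - π)) ≤ 0 :=
    mul_nonpos_of_nonneg_of_nonpos (by positivity) (mul_nonpos_of_nonneg_of_nonpos hc hhalf)
  have : 1 < C⁻¹ := (one_lt_inv₀ hC0).2 hC1
  linarith

theorem exists_isCompoundTarget_of_isMaxOn (hC1 : C < 1) {π : S → ℝ}
    (hπ : π ∈ feasibleSet S C) (hmax : IsMaxOn (PhiE S θ p) (feasibleSet S C) π) :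
    ∃ ω : ℝ, 0 < ω ∧ ω < 1 ∧ IsCompoundTarget S ω θ p π := by
  obtain ⟨c, hc, hgrad⟩ := exists_neg_smul_of_isMaxOn hp hθ hC1 hπ hmax
  have hact := psiI_eq_of_isMaxOn hp hθ hπ hmax
  have hC0 : 0 < C := hact ▸ psiI_pos hπ.1
  have hEstar := phiEstar_pos hp hθ
  set E₀ := PsiE S θ p π with hE₀_def
  have hE₀ : 0 < E₀ := psiE_pos hp hθ hπ.1
  set X := -c * PhiEstar S θ p / C ^ 2
  have hX : 0 < X := div_pos (mul_pos (neg_pos.2 hc) hEstar) (by positivity)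
  -- `ω` balances the tangent slopes of `ω / Ψ_E` and `(1 - ω) / Ψ_I` at `π`
  set ω := X / ((E₀ ^ 2)⁻¹ + X)
  have hden : 0 < (E₀ ^ 2)⁻¹ + X := by positivity
  have hω0 : 0 < ω := div_pos hX hden
  have hω1 : ω < 1 := (div_lt_one hden).2 (by linarith [inv_pos.2 (pow_pos hE₀ 2)])
  have hbalance : ω * (E₀ ^ 2)⁻¹ = (1 - ω) * X := by
    simp only [ω]
    field_simp
    ring
  refine ⟨ω, hω0, hω1, hπ.1, fun y hy => ?_⟩
  rw [psi_eq_div_psiE_add_div_psiI hp hθ ω hπ.1, psi_eq_div_psiE_add_div_psiI hp hθ ω hy, hact,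
    ← hE₀_def]
  have hE : E₀⁻¹ - (PsiE S θ p y - E₀) / E₀ ^ 2 ≤ (PsiE S θ p y)⁻¹ :=
    inv_sub_div_sq_le_inv hE₀ (psiE_pos hp hθ hy)
  have hI := inv_psiI_sub_le hπ.1 hy
  have hL : ethicalGradient θ p (y - π) = PhiEstar S θ p * (PsiE S θ p y - E₀) := by
    rw [hE₀_def, PsiE, PsiE, phiE_eq_add_ethicalGradient y, phiE_eq_add_ethicalGradient π,
      map_sub]
    field_simp
    ring
  rw [hgrad, hact, smul_apply, smul_eq_mul, hL] at hI
  have hI' : C⁻¹ + X * (PsiE S θ p y - E₀) ≤ (PsiI S y)⁻¹ := by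
    convert hI using 1
    simp only [X]
    field_simp
    ring
  linear_combination ω * hE + (1 - ω) * hI' + (PsiE S θ p y - E₀) * hbalance

end Constrained

/-- Remark 6.2 (constrained optimization as a special case of the compound approach):
if `θ(s) ≠ 0` for all `s`, then for every `C ∈ (0,1)` there is a unique `π^C ∈ (0,1)^S`
maximizing `Ψ_E` subject to `Ψ_I(π) ≥ C`; the constraint is active, `Ψ_I(π^C) = C`; and
`π^C` is the optimal compound target `π*_{ω_C}` for some weight `ω_C ∈ (0,1)`. -/
theorem constrained_is_compound (S : Type*) [Fintype S] [Nonempty S]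
    (θ p : S → ℝ) (hp : ∀ s, 0 < p s) (hθ : ∀ s, θ s ≠ 0)
    (C : ℝ) (hC0 : 0 < C) (hC1 : C < 1) :
    ∃ πC : S → ℝ,
      πC ∈ Dset S ∧ C ≤ PsiI S πC ∧
      (∀ π ∈ Dset S, C ≤ PsiI S π → PsiE S θ p π ≤ PsiE S θ p πC) ∧
      (∀ π ∈ Dset S, C ≤ PsiI S π →
        (∀ π' ∈ Dset S, C ≤ PsiI S π' → PsiE S θ p π' ≤ PsiE S θ p π) → π = πC) ∧
      PsiI S πC = C ∧
      ∃ ωC : ℝ, 0 < ωC ∧ ωC < 1 ∧ IsCompoundTarget S ωC θ p πC := by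
  obtain ⟨πC, hπC, hmax⟩ := exists_isMaxOn_phiE θ p hC0 hC1.le
  have psiE_le_iff (π π' : S → ℝ) : PsiE S θ p π ≤ PsiE S θ p π' ↔ PhiE S θ p π ≤ PhiE S θ p π' :=
    div_le_div_iff_of_pos_right (phiEstar_pos hp hθ)
  refine ⟨πC, hπC.1, hπC.2, fun π hπ hCπ => (psiE_le_iff _ _).2 (hmax ⟨hπ, hCπ⟩),
    fun π hπ hCπ hπmax => ?_, psiI_eq_of_isMaxOn hp hθ hπC hmax,
    exists_isCompoundTarget_of_isMaxOn hp hθ hC1 hπC hmax⟩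
  exact eq_of_isMaxOn hp hθ hC0 ⟨hπ, hCπ⟩ hπC
    (fun π' hπ' => (psiE_le_iff _ _).1 (hπmax π' hπ'.1 hπ'.2)) hmax
end
end
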